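/- arXiv:2405.17084 — 3 statements merged into one kernel-verified Lean document; each statement's English description precedes it below -/
import Mathlib

section
/- Let F : ℝ^{M×n} → ℝ be C² and polyconvex, meaning F(X) = G(T(X)) where T(X) is the vector of all k×k subdeterminants of X (for 1 ≤ k ≤ min(M,n)) and G is convex. Then F is rank-one convex: for all X, Y ∈ ℝ^{M×n} with rank(X - Y) ≤ 1 and λ ∈ [0,1], F(λX + (1-λ)Y) ≤ λF(X) + (1-λ)F(Y). -/
/-- Index type for all `k×k` minors of an `M×n` matrix, `1 ≤ k ≤ min M n`:
a size parameter `k` together with a choice of `k+1` rows and `k+1` columns. -/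
def MinorIndex (M n : ℕ) : Type :=
  Σ k : Fin (min M n), (Fin (k.1 + 1) ↪ Fin M) × (Fin (k.1 + 1) ↪ Fin n)

/-- The vector of all subdeterminants (minors) of `X`. -/
noncomputable def minors {M n : ℕ} (X : Fin M → Fin n → ℝ) : MinorIndex M n → ℝ :=
  fun p => ((Matrix.of X).submatrix p.2.1 p.2.2).det

/-!
Along a rank-one segment `Y + t • u vᵀ`, each row of a square matrix moves in the fixed direction
`v`; expanding the determinant multilinearly in the rows, every term using `v` in two rows
vanishes, so every minor is affine in `t`. Hence `minors` maps the segment from `Y` to `X`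
affinely onto the segment from `minors Y` to `minors X`, and convexity of `G` gives the claim.
-/

open Finset in
theorem AlternatingMap.map_add_smul_const {R M N ι : Type*} [CommSemiring R]
    [AddCommMonoid M] [Module R M] [AddCommMonoid N] [Module R N] [Fintype ι] [DecidableEq ι]
    (f : M [⋀^ι]→ₗ[R] N) (x : ι → M) (a : ι → R) (v : M) :
    f (fun i => x i + a i • v) = f x + ∑ i, a i • f (Function.update x i v) := by
  set g : Finset ι → N := fun s => f (s.piecewise (fun i => a i • v) x)
  have hg : ∀ s, g s = (∏ i ∈ s, a i) • f (s.piecewise (fun _ => v) x) := fun s => by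
    refine .trans ?_ (f.toMultilinearMap.map_piecewise_smul a _ s)
    refine congrArg f (s.piecewise_congr (fun i hi => ?_) fun i hi => ?_) <;>
      simp [hi]
  -- a term with two rows equal to `v` vanishes
  have hvanish : ∀ s, s ∉ insert ∅ (univ.image singleton) → g s = 0 := fun s hs => by
    have h2 : 1 < s.card := by
      simp only [mem_insert, mem_image, mem_univ, true_and, not_or] at hs
      by_contra! h
      rcases Nat.le_one_iff_eq_zero_or_eq_one.mp h with h | h
      · exact hs.1 (card_eq_zero.mp h)
      · obtain ⟨i, rfl⟩ := card_eq_one.mp h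
        exact hs.2 ⟨i, rfl⟩
    obtain ⟨i, hi, j, hj, hij⟩ := one_lt_card.mp h2
    rw [hg, f.map_eq_zero_of_eq _ (by simp [hi, hj]) hij, smul_zero]
  calc f (fun i => x i + a i • v) = ∑ s, g s := by
        rw [← f.map_add_univ]; congr 1; ext i; exact add_comm _ _
    _ = ∑ s ∈ insert ∅ (univ.image singleton), g s :=
        (sum_subset (subset_univ _) fun s _ hs => hvanish s hs).symm
    _ = f x + ∑ i, a i • f (Function.update x i v) := by
        rw [sum_insert (by simp [eq_comm]), sum_image fun _ _ _ _ h => singleton_injective h]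
        simp [hg, update_eq_piecewise]

namespace Matrix

variable {ι R : Type*} [Fintype ι] [DecidableEq ι] [CommRing R]

theorem det_add_smul_vecMulVec (A : Matrix ι ι R) (u v : ι → R) (t : R) :
    (A + t • vecMulVec u v).det = A.det + t * ∑ i, u i * (A.updateRow i v).det := by
  have hrows : A + t • vecMulVec u v = fun i => A i + (t * u i) • v := by
    ext i j
    simp [vecMulVec_apply, mul_assoc]
  rw [hrows, Finset.mul_sum]
  have h := detRowAlternating.map_add_smul_const A (fun i => t * u i) v
  simp only [smul_eq_mul, mul_assoc] at h
  exact h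

theorem det_smul_add_one_sub_smul_of_sub_eq_vecMulVec {X Y : Matrix ι ι R} {u v : ι → R}
    (h : X - Y = vecMulVec u v) (l : R) :
    (l • X + (1 - l) • Y).det = l * X.det + (1 - l) * Y.det := by
  have hX : X = Y + (1 : R) • vecMulVec u v := by rw [one_smul, ← h, add_sub_cancel]
  have hl : l • X + (1 - l) • Y = Y + l • vecMulVec u v := by
    rw [← h, smul_sub, sub_smul, one_smul]; abel
  rw [hl, hX, det_add_smul_vecMulVec, det_add_smul_vecMulVec]
  ring

theorem exists_eq_vecMulVec_of_rank_le_one {m n K : Type*} [Fintype n] [Field K]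
    (A : Matrix m n K) (h : A.rank ≤ 1) : ∃ u v, A = vecMulVec u v := by
  classical
  have hrank : Module.rank K (LinearMap.range A.mulVecLin) ≤ 1 := by
    rw [← Module.finrank_eq_rank]
    exact_mod_cast h
  obtain ⟨w, hw⟩ := (rank_submodule_le_one_iff' _).mp hrank
  have hcol : ∀ j, (fun i => A i j) ∈ LinearMap.range A.mulVecLin := fun j =>
    ⟨Pi.single j 1, by ext i; simp [mulVec_single]⟩
  choose c hc using fun j => Submodule.mem_span_singleton.mp (hw (hcol j))
  refine ⟨w, c, ?_⟩
  ext i j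
  simp [vecMulVec_apply, ← congrFun (hc j) i, mul_comm]

end Matrix

open Matrix in
theorem minors_smul_add_one_sub_smul {M n : ℕ} {X Y : Fin M → Fin n → ℝ}
    (h : (Matrix.of (X - Y)).rank ≤ 1) (l : ℝ) :
    minors (l • X + (1 - l) • Y) = l • minors X + (1 - l) • minors Y := by
  obtain ⟨u, v, huv⟩ := exists_eq_vecMulVec_of_rank_le_one _ h
  ext ⟨_, r, c⟩
  have hsub : (of X).submatrix r c - (of Y).submatrix r c = vecMulVec (u ∘ r) (v ∘ c) := by
    ext i j
    simpa [vecMulVec_apply] using congrFun (congrFun huv (r i)) (c j)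
  -- `submatrix` and `Matrix.of` commute with linear combinations definitionally
  exact det_smul_add_one_sub_smul_of_sub_eq_vecMulVec hsub l

theorem rankOneConvex_of_polyconvex_general {M n : ℕ}
    (F : (Fin M → Fin n → ℝ) → ℝ)
    (G : (MinorIndex M n → ℝ) → ℝ) (hG : ConvexOn ℝ Set.univ G)
    (hFG : ∀ X, F X = G (minors X)) :
    ∀ X Y : Fin M → Fin n → ℝ, (Matrix.of (X - Y)).rank ≤ 1 →
      ∀ l ∈ Set.Icc (0 : ℝ) 1,
        F (l • X + (1 - l) • Y) ≤ l * F X + (1 - l) * F Y := by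
  rintro X Y hXY l ⟨hl0, hl1⟩
  rw [hFG, hFG, hFG, minors_smul_add_one_sub_smul hXY]
  exact hG.2 trivial trivial hl0 (sub_nonneg.2 hl1) (add_sub_cancel _ _)

/-- A `C²` polyconvex function `F : ℝ^{M×n} → ℝ` (i.e. `F = G ∘ minors` with `G` convex)
is rank-one convex. -/
theorem rankOneConvex_of_polyconvex {M n : ℕ}
    (F : (Fin M → Fin n → ℝ) → ℝ) (hF : ContDiff ℝ 2 F)
    (G : (MinorIndex M n → ℝ) → ℝ) (hG : ConvexOn ℝ Set.univ G)
    (hFG : ∀ X, F X = G (minors X)) :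
    ∀ X Y : Fin M → Fin n → ℝ, (Matrix.of (X - Y)).rank ≤ 1 →
      ∀ l ∈ Set.Icc (0 : ℝ) 1,
        F (l • X + (1 - l) • Y) ≤ l * F X + (1 - l) * F Y :=
  rankOneConvex_of_polyconvex_general F G hG hFG
end

section
/- Let M, n ≥ 2, let u₁, u₂ ∈ ℝ^M be linearly independent and b₁, b₂ ∈ ℝⁿ be linearly independent. Then there do not exist u ∈ ℝ^M and b ∈ ℝⁿ such that u₁⊗b + u⊗b₁ = u₂⊗b₂. -/
/-- If `u₁, u₂ ∈ ℝ^M` are linearly independent and `b₁, b₂ ∈ ℝⁿ` are linearly independent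
(`M, n ≥ 2`), then there are no `u ∈ ℝ^M`, `b ∈ ℝⁿ` with `u₁⊗b + u⊗b₁ = u₂⊗b₂`. -/
theorem no_rankOne_solution {M n : ℕ} (hM : 2 ≤ M) (hn : 2 ≤ n)
    (u₁ u₂ : Fin M → ℝ) (b₁ b₂ : Fin n → ℝ)
    (hu : LinearIndependent ℝ ![u₁, u₂]) (hb : LinearIndependent ℝ ![b₁, b₂]) :
    ¬ ∃ (u : Fin M → ℝ) (b : Fin n → ℝ),
        Matrix.vecMulVec u₁ b + Matrix.vecMulVec u b₁ = Matrix.vecMulVec u₂ b₂ := by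
  rw [LinearIndependent.pair_iff] at hu hb
  rintro ⟨u, b, heq⟩
  have h : ∀ i α, u₁ i * b α + u i * b₁ α = u₂ i * b₂ α := by
    intro i α
    have := congrFun (congrFun heq i) α
    simpa [Matrix.vecMulVec, Matrix.add_apply] using this
  -- find i with u₁ i ≠ 0
  have hu₁ : u₁ ≠ 0 := by
    intro h0
    have := (hu 1 0 (by simp [h0])).1
    norm_num at this
  obtain ⟨i, hi⟩ := Function.ne_iff.mp hu₁
  simp only [Pi.zero_apply] at hi
  -- for each j, use independence of b₁, b₂
  have key : ∀ j, u₁ j * u₂ i - u₁ i * u₂ j = 0 := by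
    intro j
    have := hb (u₁ i * u j - u i * u₁ j) (u₁ j * u₂ i - u₁ i * u₂ j) ?_
    · exact this.2
    · funext α
      have h1 := h i α
      have h2 := h j α
      simp only [Pi.add_apply, Pi.smul_apply, smul_eq_mul, Pi.zero_apply]
      linear_combination u₁ i * h2 - u₁ j * h1
  have := (hu (u₂ i) (-(u₁ i)) ?_).2
  · simp at this
    exact hi this
  · funext j
    have := key j
    simp only [Pi.add_apply, Pi.smul_apply, smul_eq_mul, Pi.zero_apply]
    linarith
end

section
/- Fix M, n ≥ 2 and let 𝓡̃ ⊂ ℝ^{2M×n} be the set of block matrices whose top M×n block is ū⊗b for some ū ∈ ℝ^M and b ∈ ℝⁿ, and whose bottom M×n block has α-th column ∑_{β=1}^n v̄_{αβ}b_β where v̄_{αβ} = -v̄_{βα} ∈ ℝ^M (same b in both blocks). Then for every A ∈ ℝ^{2M×n} there exist at most 2n elements C₁, …, C_{2n} ∈ 𝓡̃ with A = ∑ᵢ Cᵢ and |Cᵢ| ≤ Λ|A| for a constant Λ depending only on M and n. -/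
/-!
For the sup norm `Λ = 1` works. Column `α` of the top block of `A` is the rank-one matrix
`A₁(·, α) ⊗ e_α`. Column `α` of the bottom block is obtained from `b = e_β` with `β ≠ α` (this
is where `n ≥ 2` enters) and `v = (e_α ∧ e_β) ⊗ A₂(·, α)`: contracting the wedge with `e_β`
leaves `e_α`. These `n + n` pieces sum to `A`.
-/

/-- The set `𝓡̃ ⊂ ℝ^{2M×n}` of block matrices whose top block is `ū⊗b` and whose bottom
block has `α`-th column `∑_β v̄_{αβ} b_β` with `v̄` an antisymmetric `ℝ^M`-valued array. -/
def RTilde (M n : ℕ) : Set ((Fin M → Fin n → ℝ) × (Fin M → Fin n → ℝ)) :=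
  {C | ∃ (u : Fin M → ℝ) (b : Fin n → ℝ) (v : Fin n → Fin n → Fin M → ℝ),
    (∀ α β, v α β = -v β α) ∧
    (∀ i α, C.1 i α = u i * b α) ∧
    (∀ i α, C.2 i α = ∑ β, v α β i * b β)}

theorem exists_fin_two_mul_sum_eq_add {X : Type*} [AddCommMonoid X] {n : ℕ} (f g : Fin n → X) :
    ∃ C : Fin (2 * n) → X, (∀ k, (∃ α, C k = f α) ∨ ∃ α, C k = g α) ∧
      ∑ k, C k = ∑ α, f α + ∑ α, g α := by
  let e : Fin n ⊕ Fin n ≃ Fin (2 * n) := finSumFinEquiv.trans (finCongr (two_mul n).symm)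
  refine ⟨fun k => Sum.elim f g (e.symm k), fun k => ?_, ?_⟩
  · rcases h : e.symm k with α | α
    exacts [.inl ⟨α, by simp [h]⟩, .inr ⟨α, by simp [h]⟩]
  · rw [e.symm.sum_comp (Sum.elim f g), Fintype.sum_sum_type]
    rfl

section columnPart

variable {ι κ R : Type*} [DecidableEq κ]

def columnPart [Zero R] (X : ι → κ → R) (α : κ) : ι → κ → R := fun i => Pi.single α (X i α)

theorem columnPart_apply [Zero R] (X : ι → κ → R) (α : κ) (i : ι) (γ : κ) :
    columnPart X α i γ = if γ = α then X i α else 0 :=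
  Pi.single_apply α (X i α) γ

theorem sum_columnPart [Fintype κ] [AddCommMonoid R] (X : ι → κ → R) :
    ∑ α, columnPart X α = X := by
  ext i : 1
  rw [Finset.sum_apply]
  exact Finset.univ_sum_single (X i)

theorem norm_columnPart_le [Fintype ι] [Fintype κ] [NormedAddCommGroup R] (X : ι → κ → R) (α : κ) :
    ‖columnPart X α‖ ≤ ‖X‖ :=
  pi_norm_le_iff_of_nonneg (norm_nonneg X) |>.mpr fun i => by
    rw [columnPart, Pi.norm_single]
    exact (norm_le_pi_norm (X i) α).trans (norm_le_pi_norm X i)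

end columnPart

variable {M n : ℕ}

theorem columnPart_zero_mem_RTilde (X : Fin M → Fin n → ℝ) (α : Fin n) :
    (columnPart X α, 0) ∈ RTilde M n :=
  ⟨fun i => X i α, Pi.single α 1, 0, by simp,
    fun i γ => by simp [columnPart_apply, Pi.single_apply], by simp⟩

theorem zero_columnPart_mem_RTilde (X : Fin M → Fin n → ℝ) {α β : Fin n} (hβα : β ≠ α) :
    (0, columnPart X α) ∈ RTilde M n := by
  let e : Fin n → Fin n → ℝ := fun γ => Pi.single γ 1
  refine ⟨0, e β, fun δ γ i => (e α δ * e β γ - e β δ * e α γ) * X i α,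
    fun δ γ => by ext i; simp only [Pi.neg_apply]; ring, by simp, fun i δ => ?_⟩
  simp [e, columnPart_apply, Pi.single_apply, hβα]

theorem RTilde_decomposition_general (M n : ℕ) (hn : 2 ≤ n) :
    ∃ Λ : ℝ, 0 < Λ ∧
      ∀ A : (Fin M → Fin n → ℝ) × (Fin M → Fin n → ℝ),
        ∃ C : Fin (2 * n) → (Fin M → Fin n → ℝ) × (Fin M → Fin n → ℝ),
          (∀ i, C i ∈ RTilde M n) ∧ A = ∑ i, C i ∧ ∀ i, ‖C i‖ ≤ Λ * ‖A‖ := by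
  have : Nontrivial (Fin n) := Fin.nontrivial_iff_two_le.mpr hn
  refine ⟨1, one_pos, fun A => ?_⟩
  obtain ⟨C, hC, hsum⟩ := exists_fin_two_mul_sum_eq_add
    (fun α => (columnPart A.1 α, 0)) (fun α => (0, columnPart A.2 α))
  refine ⟨C, fun k => ?_, ?_, fun k => ?_⟩
  · rcases hC k with ⟨α, hα⟩ | ⟨α, hα⟩ <;> rw [hα]
    · exact columnPart_zero_mem_RTilde A.1 α
    · obtain ⟨β, hβ⟩ := exists_ne α
      exact zero_columnPart_mem_RTilde A.2 hβ
  · ext1 <;> simp [hsum, Prod.fst_sum, Prod.snd_sum, sum_columnPart]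
  · rw [one_mul]
    rcases hC k with ⟨α, hα⟩ | ⟨α, hα⟩ <;> rw [hα, Prod.norm_mk]
    · simpa using (norm_columnPart_le A.1 α).trans (norm_fst_le A)
    · simpa using (norm_columnPart_le A.2 α).trans (norm_snd_le A)

/-- Quantitative connectivity: there is `Λ = Λ(M,n) > 0` such that any
`A ∈ ℝ^{2M×n}` is a sum of at most `2n` elements of `𝓡̃`, each of norm at most `Λ|A|`. -/
theorem RTilde_decomposition (M n : ℕ) (hM : 2 ≤ M) (hn : 2 ≤ n) :
    ∃ Λ : ℝ, 0 < Λ ∧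
      ∀ A : (Fin M → Fin n → ℝ) × (Fin M → Fin n → ℝ),
        ∃ C : Fin (2 * n) → (Fin M → Fin n → ℝ) × (Fin M → Fin n → ℝ),
          (∀ i, C i ∈ RTilde M n) ∧ A = ∑ i, C i ∧ ∀ i, ‖C i‖ ≤ Λ * ‖A‖ :=
  RTilde_decomposition_general M n hn
end
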